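/- Let f ∈ A(d,h,e), i.e. f is an algebraic power series with f(0)=0, minimal polynomial P with deg_T(P) ≤ d, height ≤ h, and ord((∂P/∂T)(x,f)) = e. Write f = f⁽⁰⁾ + x^e f⁽¹⁾ with f⁽⁰⁾ a polynomial of degree ≤ e vanishing at 0 and f⁽¹⁾ a power series vanishing at 0. Then f⁽¹⁾ is an algebraic power series that is the unique root vanishing at 0 of a polynomial R(x,T) ∈ k[x,T] with deg_T(R) ≤ d, deg_x(R) ≤ h + e(d−2), R(0,0)=0 and (∂R/∂T)(0,0) ≠ 0; in particular f⁽¹⁾ ∈ I(d, h+e(d−2)). -/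

import Mathlib

open Polynomial PowerSeries

/-- Evaluation of `P ∈ k[x][T]` at a power series `f`, substituting `T ↦ f` and
viewing the coefficients (polynomials in `x`) as power series. -/
noncomputable def algEval {k : Type*} [CommRing k]
    (P : Polynomial (Polynomial k)) (f : PowerSeries k) : PowerSeries k :=
  Polynomial.eval₂ (Polynomial.eval₂RingHom (PowerSeries.C (R := k)) PowerSeries.X) f P

/-- `f` is an algebraic power series: a root of a nonzero polynomial in `k[x][T]`. -/
def IsAlgSeries {k : Type*} [CommRing k] (f : PowerSeries k) : Prop :=
  ∃ P : Polynomial (Polynomial k), P ≠ 0 ∧ algEval P f = 0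

/-- `P` is a minimal polynomial of `f`: a generator of the kernel of `Q ↦ Q(x,f)`. -/
def IsMinPolyOf {k : Type*} [CommRing k]
    (P : Polynomial (Polynomial k)) (f : PowerSeries k) : Prop :=
  P ≠ 0 ∧ ∀ Q : Polynomial (Polynomial k), algEval Q f = 0 ↔ P ∣ Q

/-- Height of `P ∈ k[x][T]`: max of the `x`-degrees of its coefficients. -/
noncomputable def htPoly {k : Type*} [CommRing k] (P : Polynomial (Polynomial k)) : ℕ :=
  P.support.sup fun i => (P.coeff i).natDegree

/-- `P(0,0)`. -/
noncomputable def evalOO {k : Type*} [CommRing k] (P : Polynomial (Polynomial k)) : k :=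
  (P.eval 0).eval 0

/-- The set `A(d,h)` of algebraic power series of degree ≤ d and height ≤ h. -/
def setA (k : Type*) [CommRing k] (d h : ℕ) : Set (PowerSeries k) :=
  {f | ∃ P, IsMinPolyOf P f ∧ P.natDegree ≤ d ∧ htPoly P ≤ h}

/-- The set `A(d,h)₀` of series in `A(d,h)` vanishing at `0`. -/
def setA0 (k : Type*) [CommRing k] (d h : ℕ) : Set (PowerSeries k) :=
  {f | PowerSeries.constantCoeff (R := k) f = 0 ∧ f ∈ setA k d h}

/-- The set `I(d,h)`: members of `A(d,h)₀` whose minimal polynomial satisfies the IFT. -/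
def setI (k : Type*) [CommRing k] (d h : ℕ) : Set (PowerSeries k) :=
  {f | PowerSeries.constantCoeff (R := k) f = 0 ∧
    ∃ P, IsMinPolyOf P f ∧ P.natDegree ≤ d ∧ htPoly P ≤ h ∧
      evalOO P = 0 ∧ evalOO (Polynomial.derivative P) ≠ 0}

/-- The set `A(d,h,e)`. -/
def setAe (k : Type*) [CommRing k] (d h e : ℕ) : Set (PowerSeries k) :=
  {f | PowerSeries.constantCoeff (R := k) f = 0 ∧
    ∃ P, IsMinPolyOf P f ∧ P.natDegree ≤ d ∧ htPoly P ≤ h ∧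
      (algEval (Polynomial.derivative P) f).order = e}

/-- The tail `f⁽¹⁾` in the decomposition `f = f⁽⁰⁾ + x^e f⁽¹⁾`. -/
noncomputable def tailPart {k : Type*} [CommRing k] (f : PowerSeries k) (e : ℕ) :
    PowerSeries k :=
  PowerSeries.mk fun n => if n = 0 then 0 else PowerSeries.coeff (R := k) (n + e) f

/-- The polynomial with coefficient vector `a` : coefficient of `x^i T^j` is `a (i,j)`. -/
noncomputable def polyOf {k : Type*} [CommRing k] {h d : ℕ}
    (a : Fin (h+1) × Fin (d+1) → k) : Polynomial (Polynomial k) :=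
  ∑ p : Fin (h+1) × Fin (d+1),
    Polynomial.C (Polynomial.C (a p) * Polynomial.X ^ (p.1 : ℕ)) * Polynomial.X ^ (p.2 : ℕ)

/-- A Zariski-closed subset of affine space `k^ι`. -/
def IsZarClosed {k : Type*} [CommRing k] {ι : Type*} (s : Set (ι → k)) : Prop :=
  ∃ S : Set (MvPolynomial ι k), s = {x | ∀ p ∈ S, MvPolynomial.eval x p = 0}

/-- Constructible subsets of affine space: the boolean algebra generated by closed sets. -/
inductive IsConstructibleSet {k : Type*} [CommRing k] {ι : Type*} : Set (ι → k) → Prop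
  | of_closed (s : Set (ι → k)) : IsZarClosed s → IsConstructibleSet s
  | compl (s : Set (ι → k)) : IsConstructibleSet s → IsConstructibleSet sᶜ
  | union (s t : Set (ι → k)) : IsConstructibleSet s → IsConstructibleSet t →
      IsConstructibleSet (s ∪ t)

/-- The vanishing ideal of a subset of affine space. -/
noncomputable def vanIdeal {k : Type*} [CommRing k] {ι : Type*} (s : Set (ι → k)) :
    Ideal (MvPolynomial ι k) where
  carrier := {p | ∀ x ∈ s, MvPolynomial.eval x p = 0}
  add_mem' := by intro a b ha hb x hx; simp [map_add, ha x hx, hb x hx]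
  zero_mem' := by intro x hx; simp
  smul_mem' := by intro c a ha x hx; simp [ha x hx]

/-- Dimension of (the Zariski closure of) a subset of affine space. -/
noncomputable def dimSet {k : Type*} [CommRing k] {ι : Type*} (s : Set (ι → k)) :
    WithBot (WithTop ℕ) :=
  ringKrullDim (MvPolynomial ι k ⧸ vanIdeal s)

/-- Height of an ideal: infimum of the dimensions of localizations at primes above it. -/
noncomputable def idealHeight {R : Type*} [CommRing R] (I : Ideal R) : WithBot (WithTop ℕ) :=
  sInf {d | ∃ P : Ideal R, ∃ hP : P.IsPrime, I ≤ P ∧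
    ringKrullDim (@Localization.AtPrime R _ P hP) = d}



section Helpers

variable {k : Type*} [CommRing k]

lemma psi_eq : (Polynomial.eval₂RingHom (PowerSeries.C (R := k)) PowerSeries.X :
    Polynomial k →+* PowerSeries k) = Polynomial.coeToPowerSeries.ringHom := by
  refine RingHom.ext fun p => ?_
  simp only [coe_eval₂RingHom, Polynomial.eval₂_C_X_eq_coe,
    Polynomial.coeToPowerSeries.ringHom_apply]

lemma algEval_eq (P : Polynomial (Polynomial k)) (g : PowerSeries k) :
    algEval P g = (P.map (Polynomial.coeToPowerSeries.ringHom)).eval g := by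
  rw [algEval, Polynomial.eval₂_eq_eval_map, psi_eq]

lemma algEval_mul (A B : Polynomial (Polynomial k)) (g : PowerSeries k) :
    algEval (A * B) g = algEval A g * algEval B g := by
  simp [algEval_eq, Polynomial.map_mul]

lemma algEval_C (p : Polynomial k) (g : PowerSeries k) :
    algEval (Polynomial.C p) g = (p : PowerSeries k) := by
  simp [algEval_eq]

lemma constCoeff_algEval (A : Polynomial (Polynomial k)) {g : PowerSeries k}
    (hg : PowerSeries.constantCoeff (R := k) g = 0) :
    PowerSeries.constantCoeff (R := k) (algEval A g) = evalOO A := by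
  rw [algEval, Polynomial.hom_eval₂, hg, Polynomial.eval₂_at_zero, evalOO,
    ← Polynomial.coeff_zero_eq_eval_zero, ← Polynomial.coeff_zero_eq_eval_zero]
  rw [RingHom.comp_apply, coe_eval₂RingHom, Polynomial.eval₂_C_X_eq_coe,
    ← PowerSeries.coeff_zero_eq_constantCoeff_apply, Polynomial.coeff_coe]

lemma comp_C_mul_X_coeff (p : Polynomial (Polynomial k)) (a : Polynomial k) (j : ℕ) :
    (p.comp (Polynomial.C a * Polynomial.X)).coeff j = p.coeff j * a ^ j := by
  rw [Polynomial.comp_eq_sum_left, Polynomial.sum, Polynomial.finset_sum_coeff]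
  have hterm : ∀ i, (Polynomial.C (p.coeff i) * (Polynomial.C a * Polynomial.X) ^ i).coeff j
      = if j = i then p.coeff i * a ^ i else 0 := by
    intro i
    rw [mul_pow, ← Polynomial.C_pow, ← mul_assoc, ← Polynomial.C_mul, Polynomial.coeff_C_mul,
      Polynomial.coeff_X_pow]
    by_cases h : j = i <;> simp [h]
  simp_rw [hterm]
  rw [Finset.sum_ite_eq p.support j (fun i => p.coeff i * a ^ i)]
  by_cases h : j ∈ p.support
  · simp [h]
  · simp [h, Polynomial.notMem_support_iff.mp h]

/-- swap variables -/
noncomputable def swapv {k : Type*} [CommRing k] :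
    Polynomial (Polynomial k) →+* Polynomial (Polynomial k) :=
  Polynomial.eval₂RingHom (Polynomial.mapRingHom Polynomial.C) (Polynomial.C Polynomial.X)

lemma coeff_swapv (A : Polynomial (Polynomial k)) (n i : ℕ) :
    ((swapv A).coeff n).coeff i = (A.coeff i).coeff n := by
  rw [swapv, coe_eval₂RingHom, Polynomial.eval₂_eq_sum, Polynomial.sum,
    Polynomial.finset_sum_coeff, Polynomial.finset_sum_coeff]
  have hterm : ∀ j, (((Polynomial.mapRingHom (Polynomial.C (R := k)) (A.coeff j)) *
      (Polynomial.C Polynomial.X) ^ j).coeff n).coeff i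
      = if i = j then (A.coeff j).coeff n else 0 := by
    intro j
    rw [← Polynomial.C_pow, Polynomial.coeff_mul_C, Polynomial.coe_mapRingHom,
      Polynomial.coeff_map, Polynomial.coeff_C_mul, Polynomial.coeff_X_pow]
    by_cases h : i = j <;> simp [h]
  simp_rw [hterm]
  rw [Finset.sum_ite_eq A.support i (fun j => (A.coeff j).coeff n)]
  by_cases h : i ∈ A.support
  · simp [h]
  · simp [h, Polynomial.notMem_support_iff.mp h]

lemma swapv_eq_zero_iff {A : Polynomial (Polynomial k)} : swapv A = 0 ↔ A = 0 := by
  constructor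
  · intro h
    ext i n
    have := coeff_swapv A n i
    rw [h] at this
    simpa using this.symm
  · rintro rfl; simp [swapv]

lemma natDegree_swapv (A : Polynomial (Polynomial k)) : (swapv A).natDegree = htPoly A := by
  apply le_antisymm
  · rw [Polynomial.natDegree_le_iff_coeff_eq_zero]
    intro m hm
    ext i
    rw [coeff_swapv, Polynomial.coeff_zero]
    by_cases h : i ∈ A.support
    · exact Polynomial.coeff_eq_zero_of_natDegree_lt
        (lt_of_le_of_lt (Finset.le_sup (f := fun i => (A.coeff i).natDegree) h) hm)
    · rw [Polynomial.notMem_support_iff.mp h]; simp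
  · apply Finset.sup_le
    intro i hi
    rw [Polynomial.natDegree_le_iff_coeff_eq_zero]
    intro m hm
    rw [← coeff_swapv, Polynomial.coeff_eq_zero_of_natDegree_lt hm, Polynomial.coeff_zero]

lemma htPoly_dvd_le {A B : Polynomial (Polynomial k)} (h : A ∣ B) (hB : B ≠ 0)
    [IsDomain k] : htPoly A ≤ htPoly B := by
  rw [← natDegree_swapv, ← natDegree_swapv]
  exact Polynomial.natDegree_le_of_dvd (map_dvd swapv h) (fun hz => hB (swapv_eq_zero_iff.mp hz))


end Helpers
section MoreHelpers

variable {k : Type*} [CommRing k]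

lemma algEval_comp (A B : Polynomial (Polynomial k)) (g : PowerSeries k) :
    algEval (A.comp B) g = algEval A (algEval B g) := by
  rw [algEval, algEval, algEval, Polynomial.eval₂_comp]

lemma algEval_X (g : PowerSeries k) :
    algEval (Polynomial.X : Polynomial (Polynomial k)) g = g := by
  simp [algEval]

lemma algEval_add (A B : Polynomial (Polynomial k)) (g : PowerSeries k) :
    algEval (A + B) g = algEval A g + algEval B g := by
  simp [algEval, Polynomial.eval₂_add]

lemma eval_coe (A : Polynomial (Polynomial k)) (b : Polynomial k) :
    ((A.eval b : Polynomial k) : PowerSeries k)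
      = (A.map (Polynomial.coeToPowerSeries.ringHom)).eval (b : PowerSeries k) := by
  simp only [← Polynomial.coeToPowerSeries.ringHom_apply, ← Polynomial.eval₂_eq_eval_map]
  rw [Polynomial.eval₂_at_apply]

lemma constCoeff_eval {A : Polynomial (PowerSeries k)} {u : PowerSeries k}
    (hu : PowerSeries.constantCoeff (R := k) u = 0) :
    PowerSeries.constantCoeff (R := k) (A.eval u)
      = PowerSeries.constantCoeff (R := k) (A.coeff 0) := by
  have h1 : A.eval u = Polynomial.eval₂ (RingHom.id _) u A := rfl
  rw [h1, Polynomial.hom_eval₂, hu, Polynomial.eval₂_at_zero]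
  rfl

lemma evalOO_derivative_eq (A : Polynomial (Polynomial k)) :
    evalOO (Polynomial.derivative A) = (A.coeff 1).coeff 0 := by
  rw [evalOO, ← Polynomial.coeff_zero_eq_eval_zero, ← Polynomial.coeff_zero_eq_eval_zero,
    Polynomial.coeff_derivative]
  simp

lemma natDegree_eval_le (A : Polynomial (Polynomial k)) (b : Polynomial k) :
    (A.eval b).natDegree ≤ htPoly A + A.natDegree * b.natDegree := by
  rw [Polynomial.eval_eq_sum, Polynomial.sum]
  apply Polynomial.natDegree_sum_le_of_forall_le
  intro i hi
  refine le_trans (Polynomial.natDegree_mul_le) (add_le_add ?_ ?_)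
  · exact Finset.le_sup (f := fun i => (A.coeff i).natDegree) hi
  · exact le_trans (Polynomial.natDegree_pow_le)
      (Nat.mul_le_mul_right _ (Polynomial.le_natDegree_of_ne_zero
        (Polynomial.mem_support_iff.mp hi)))

lemma htPoly_hasseDeriv_le (P : Polynomial (Polynomial k)) (j : ℕ) :
    htPoly (Polynomial.hasseDeriv j P) ≤ htPoly P := by
  apply Finset.sup_le
  intro i _
  rw [Polynomial.hasseDeriv_coeff]
  refine le_trans Polynomial.natDegree_mul_le ?_
  rw [Polynomial.natDegree_natCast, zero_add]
  by_cases h : P.coeff (i + j) = 0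
  · simp [h]
  · exact Finset.le_sup (f := fun i => (P.coeff i).natDegree)
      (Polynomial.mem_support_iff.mpr h)

end MoreHelpers

section EvalOO
variable {k : Type*} [CommRing k]
lemma evalOO_add (A B : Polynomial (Polynomial k)) : evalOO (A + B) = evalOO A + evalOO B := by
  simp [evalOO]
lemma evalOO_mul (A B : Polynomial (Polynomial k)) : evalOO (A * B) = evalOO A * evalOO B := by
  simp [evalOO]
end EvalOO
section MinPoly

variable {k : Type*} [Field k]

noncomputable local instance : DecidableEq k := Classical.decEq k

lemma natDegree_pos_of_root {π : Polynomial (Polynomial k)} (hne : π ≠ 0)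
    {t : PowerSeries k} (hroot : algEval π t = 0) : 0 < π.natDegree := by
  rcases Nat.eq_zero_or_pos π.natDegree with h | h
  · exfalso
    obtain ⟨a, ha⟩ := Polynomial.natDegree_eq_zero.mp h
    rw [← ha, algEval_C] at hroot
    exact hne (by rw [← ha, Polynomial.coe_eq_zero_iff.mp hroot, map_zero])
  · exact h

lemma isPrimitive_of_irreducible_root {π : Polynomial (Polynomial k)}
    (hi : Irreducible π) {t : PowerSeries k} (hroot : algEval π t = 0) :
    π.IsPrimitive := by
  have hdeg : 0 < π.natDegree := natDegree_pos_of_root hi.ne_zero hroot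
  intro c hc
  rcases hc with ⟨w, hw⟩
  rcases hi.isUnit_or_isUnit hw with h | h
  · exact Polynomial.isUnit_C.mp h
  · exfalso
    have h1 : w.natDegree = 0 := Polynomial.natDegree_eq_zero_of_isUnit h
    have h2 : π.natDegree ≤ 0 := by
      rw [hw]
      refine le_trans (Polynomial.natDegree_mul_le) ?_
      simp [h1]
    omega

lemma exists_irreducible_root {t : PowerSeries k} (S : Polynomial (Polynomial k)) :
    S ≠ 0 → algEval S t = 0 → ∃ π, Irreducible π ∧ algEval π t = 0 ∧ π ∣ S := by
  refine WfDvdMonoid.induction_on_irreducible S (fun h => absurd rfl h) ?_ ?_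
  · intro u hu _ h0
    exfalso
    have h1 : IsUnit (algEval u t) := by
      simpa [algEval, Polynomial.coe_eval₂RingHom] using hu.map (Polynomial.eval₂RingHom
        (Polynomial.eval₂RingHom (PowerSeries.C (R := k)) PowerSeries.X) t)
    rw [h0] at h1
    exact not_isUnit_zero h1
  · intro a i ha hi IH _ h0
    rw [algEval_mul] at h0
    rcases mul_eq_zero.mp h0 with h | h
    · exact ⟨i, hi, h, dvd_mul_right i a⟩
    · obtain ⟨π, h1, h2, h3⟩ := IH ha h
      exact ⟨π, h1, h2, h3.mul_left i⟩

lemma dvd_of_root {t : PowerSeries k} {π Q : Polynomial (Polynomial k)}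
    (hi : Irreducible π) (hπ : algEval π t = 0) (hQ : algEval Q t = 0) : π ∣ Q := by
  by_cases hQ0 : Q = 0
  · simp [hQ0]
  have hπprim : π.IsPrimitive := isPrimitive_of_irreducible_root hi hπ
  -- reduce to primitive part
  have hcont : ((Q.content : Polynomial k) : PowerSeries k) ≠ 0 := by
    rw [Ne, Polynomial.coe_eq_zero_iff, Polynomial.content_eq_zero_iff]
    exact hQ0
  have hQ' : algEval Q.primPart t = 0 := by
    have h2 : algEval (Polynomial.C Q.content * Q.primPart) t = 0 := by
      rw [← Q.eq_C_content_mul_primPart]; exact hQ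
    rw [algEval_mul, algEval_C] at h2
    exact (mul_eq_zero.mp h2).resolve_left hcont
  refine dvd_trans ?_ Q.primPart_dvd
  set K := FractionRing (Polynomial k)
  rw [hπprim.dvd_iff_fraction_map_dvd_fraction_map K]
  by_contra hndvd
  have hirrK : Irreducible (π.map (algebraMap (Polynomial k) K)) :=
    (hπprim.irreducible_iff_irreducible_map_fraction_map (K := K)).mp hi
  obtain ⟨a, b, hab⟩ := hirrK.coprime_iff_not_dvd.mpr hndvd
  -- evaluation into Laurent series
  set L := LaurentSeries k
  have hinj : Function.Injective ((algebraMap (PowerSeries k) L).comp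
      (Polynomial.coeToPowerSeries.ringHom (R := k))) := by
    refine (IsFractionRing.injective (PowerSeries k) L).comp ?_
    intro p q h
    simp only [Polynomial.coeToPowerSeries.ringHom_apply] at h
    exact Polynomial.coe_injective k h
  set χ : K →+* L := IsFractionRing.lift hinj with hχ
  set Θ : Polynomial K →+* L :=
    Polynomial.eval₂RingHom χ (algebraMap (PowerSeries k) L t) with hΘ
  have hcompat : ∀ A : Polynomial (Polynomial k),
      Θ (A.map (algebraMap (Polynomial k) K)) =
        algebraMap (PowerSeries k) L (algEval A t) := by
    intro A
    rw [hΘ, Polynomial.coe_eval₂RingHom, Polynomial.eval₂_map, algEval, Polynomial.hom_eval₂]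
    congr 1
    refine RingHom.ext fun p => ?_
    rw [RingHom.comp_apply, hχ, IsFractionRing.lift_algebraMap]
    simp only [RingHom.comp_apply, Polynomial.coeToPowerSeries.ringHom_apply,
      Polynomial.coe_eval₂RingHom, Polynomial.eval₂_C_X_eq_coe]
  have h0 : Θ (π.map (algebraMap (Polynomial k) K)) = 0 := by rw [hcompat, hπ, map_zero]
  have h0' : Θ (Q.primPart.map (algebraMap (Polynomial k) K)) = 0 := by
    rw [hcompat, hQ', map_zero]
  have hone := congrArg Θ hab
  rw [map_add, map_mul, map_mul, h0, h0', mul_zero, mul_zero, add_zero, map_one] at hone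
  exact one_ne_zero hone.symm

lemma exists_isMinPolyOf {t : PowerSeries k} {R0 : Polynomial (Polynomial k)}
    (hR0 : R0 ≠ 0) (hroot : algEval R0 t = 0) :
    ∃ π, IsMinPolyOf π t ∧ π ∣ R0 := by
  obtain ⟨π, hi, hroot', hdvd⟩ := exists_irreducible_root R0 hR0 hroot
  refine ⟨π, ⟨hi.ne_zero, fun Q => ⟨fun hQ => dvd_of_root hi hroot' hQ, ?_⟩⟩, hdvd⟩
  rintro ⟨c, rfl⟩
  rw [algEval_mul, hroot', zero_mul]

end MinPoly

theorem stmt_4 {k : Type*} [Field k] (d h e : ℕ) (f : PowerSeries k)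
    (hf : f ∈ setAe k d h e) :
    (∃ R : Polynomial (Polynomial k), R.natDegree ≤ d ∧ htPoly R ≤ h + e * (d - 2) ∧
      evalOO R = 0 ∧ evalOO (Polynomial.derivative R) ≠ 0 ∧
      algEval R (tailPart f e) = 0 ∧
      ∀ g : PowerSeries k, PowerSeries.constantCoeff (R := k) g = 0 → algEval R g = 0 →
        g = tailPart f e) ∧
    tailPart f e ∈ setI k d (h + e * (d - 2)) := by
  obtain ⟨hcf, P, hmin, hd, hh, hord⟩ := hf
  set t := tailPart f e with ht
  have hct : PowerSeries.constantCoeff (R := k) t = 0 := by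
    rw [ht, tailPart, ← PowerSeries.coeff_zero_eq_constantCoeff_apply, PowerSeries.coeff_mk]
    simp
  have hPf : algEval P f = 0 := (hmin.2 P).mpr dvd_rfl
  set ψ := (Polynomial.coeToPowerSeries.ringHom : Polynomial k →+* PowerSeries k) with hψ
  set f0 : Polynomial k := PowerSeries.trunc (e + 1) f with hf0
  -- decomposition f = f0 + X^e * t
  have hXdvdt : (PowerSeries.X : PowerSeries k) ∣ t := PowerSeries.X_dvd_iff.mpr hct
  have hsum : ((f0 : PowerSeries k)) + PowerSeries.X ^ e * t = f := by
    ext n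
    rw [map_add, Polynomial.coeff_coe, hf0, PowerSeries.coeff_trunc]
    rcases lt_trichotomy n e with hn | hn | hn
    · have h0 : PowerSeries.coeff (R := k) n (PowerSeries.X ^ e * t) = 0 :=
        (PowerSeries.X_pow_dvd_iff.mp (dvd_mul_right _ _)) n hn
      rw [h0, if_pos (by omega), add_zero]
    · subst hn
      have h0 : PowerSeries.coeff (R := k) n (PowerSeries.X ^ n * t) = PowerSeries.coeff (R := k) 0 t := by
        simpa using PowerSeries.coeff_X_pow_mul t n 0
      rw [h0, if_pos (by omega), PowerSeries.coeff_zero_eq_constantCoeff_apply, hct, add_zero]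
    · have h1 : n = (n - e) + e := by omega
      rw [if_neg (by omega), zero_add, h1, PowerSeries.coeff_X_pow_mul, ht, tailPart,
        PowerSeries.coeff_mk, if_neg (by omega)]
  set Pm := P.map ψ with hPmdef
  have hPmf : Pm.eval f = 0 := by rw [hPmdef, hψ, ← algEval_eq]; exact hPf
  have hDevmap : Pm.derivative = (Polynomial.derivative P).map ψ := by
    rw [hPmdef, Polynomial.derivative_map]
  have hordDev : (Pm.derivative.eval f).order = (e : ℕ∞) := by
    rw [hDevmap, hψ, ← algEval_eq]; exact_mod_cast hord
  obtain ⟨hDevne, hDevlt⟩ := PowerSeries.order_eq_nat.mp hordDev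
  have hXe_f : (PowerSeries.X : PowerSeries k) ^ e ∣ Pm.derivative.eval f :=
    PowerSeries.X_pow_dvd_iff.mpr hDevlt
  -- D0 and its order
  set D0 := Pm.derivative.eval ((f0 : Polynomial k) : PowerSeries k) with hD0
  have hf0f : ((f0 : Polynomial k) : PowerSeries k) - f = -(PowerSeries.X ^ e * t) := by
    rw [← hsum]; ring
  have hXe1diff : (PowerSeries.X : PowerSeries k) ^ (e + 1) ∣ D0 - Pm.derivative.eval f := by
    refine dvd_trans ?_ (Polynomial.sub_dvd_eval_sub _ _ Pm.derivative)
    rw [hf0f]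
    refine dvd_neg.mpr ?_
    rw [pow_succ]
    exact mul_dvd_mul dvd_rfl hXdvdt
  have hXeD0 : (PowerSeries.X : PowerSeries k) ^ e ∣ D0 := by
    have h2 : D0 = (D0 - Pm.derivative.eval f) + Pm.derivative.eval f := by ring
    rw [h2]
    exact dvd_add (dvd_trans (pow_dvd_pow _ (Nat.le_succ e)) hXe1diff) hXe_f
  have hcoeffeD0 : PowerSeries.coeff (R := k) e D0 ≠ 0 := by
    have h3 : PowerSeries.coeff (R := k) e (D0 - Pm.derivative.eval f) = 0 :=
      PowerSeries.X_pow_dvd_iff.mp hXe1diff e (by omega)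
    rw [map_sub, sub_eq_zero] at h3
    rw [h3]; exact hDevne
  -- second-order expansion
  obtain ⟨cq, hcq⟩ := Pm.binomExpansion ((f0 : Polynomial k) : PowerSeries k)
    (PowerSeries.X ^ e * t)
  rw [hsum, hPmf] at hcq
  have hdvd0 : (PowerSeries.X : PowerSeries k) ^ (2 * e) ∣
      Pm.eval ((f0 : Polynomial k) : PowerSeries k) := by
    have h4 : Pm.eval ((f0 : Polynomial k) : PowerSeries k)
        = -(D0 * (PowerSeries.X ^ e * t)) - cq * (PowerSeries.X ^ e * t) ^ 2 := by
      rw [← hD0] at hcq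
      linear_combination -hcq
    rw [h4]
    refine dvd_sub (dvd_neg.mpr ?_) ?_
    · rw [two_mul, pow_add]
      exact mul_dvd_mul hXeD0 (dvd_mul_right _ _)
    · refine dvd_mul_of_dvd_right ?_ cq
      have h20 : (PowerSeries.X ^ e * t) ^ 2 = PowerSeries.X ^ (2 * e) * t ^ 2 := by ring
      rw [h20]
      exact dvd_mul_right _ _
  -- the polynomial Q
  set Q := (Polynomial.taylor f0 P).comp
    (Polynomial.C (Polynomial.X ^ e) * Polynomial.X) with hQdef
  have hQcoeff : ∀ j, Q.coeff j = (Polynomial.taylor f0 P).coeff j * (Polynomial.X ^ e) ^ j :=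
    fun j => comp_C_mul_X_coeff _ _ j
  -- transfers to k[x]
  have hkey0 : ((P.eval f0 : Polynomial k) : PowerSeries k)
      = Pm.eval ((f0 : Polynomial k) : PowerSeries k) := eval_coe P f0
  have hkey1 : ((P.derivative.eval f0 : Polynomial k) : PowerSeries k) = D0 := by
    rw [hD0, hDevmap, hψ]
    exact eval_coe P.derivative f0
  have hT0 : (Polynomial.X : Polynomial k) ^ (2 * e) ∣ (Polynomial.taylor f0 P).coeff 0 := by
    rw [Polynomial.taylor_coeff_zero]
    refine Polynomial.X_pow_dvd_iff.mpr fun i hi => ?_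
    have h5 := PowerSeries.X_pow_dvd_iff.mp hdvd0 i hi
    rw [← hkey0, Polynomial.coeff_coe] at h5
    exact h5
  have hT1 : (Polynomial.X : Polynomial k) ^ e ∣ (Polynomial.taylor f0 P).coeff 1 := by
    rw [Polynomial.taylor_coeff_one]
    refine Polynomial.X_pow_dvd_iff.mpr fun i hi => ?_
    have h5 := PowerSeries.X_pow_dvd_iff.mp hXeD0 i hi
    rw [← hkey1, Polynomial.coeff_coe] at h5
    exact h5
  -- divisibility of Q by C (X^(2e))
  have hCd : (Polynomial.C ((Polynomial.X : Polynomial k) ^ (2 * e))) ∣ Q := by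
    rw [Polynomial.C_dvd_iff_dvd_coeff]
    intro j
    rw [hQcoeff j]
    match j with
    | 0 => simpa using hT0
    | 1 =>
      rw [pow_one, two_mul, pow_add]
      exact mul_dvd_mul hT1 dvd_rfl
    | (j + 2) =>
      refine dvd_mul_of_dvd_right ?_ _
      rw [← pow_mul]
      exact pow_dvd_pow _ (by nlinarith)
  obtain ⟨R, hR⟩ := hCd
  have hQR : ∀ j, Q.coeff j = Polynomial.X ^ (2 * e) * R.coeff j := by
    intro j
    rw [hR, Polynomial.coeff_C_mul]
  -- root property of Q and R
  have hQt : algEval Q t = 0 := by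
    rw [hQdef, algEval_comp]
    have hB : algEval (Polynomial.C (Polynomial.X ^ e) * Polynomial.X) t
        = PowerSeries.X ^ e * t := by
      rw [algEval_mul, algEval_C, algEval_X, Polynomial.coe_pow, Polynomial.coe_X]
    rw [hB, Polynomial.taylor_apply, algEval_comp, algEval_add, algEval_X, algEval_C,
      algEval_eq, ← hψ, ← hPmdef, add_comm, hsum]
    exact hPmf
  have hXne : ((Polynomial.X ^ (2 * e) : Polynomial k) : PowerSeries k) ≠ 0 := by
    rw [Ne, Polynomial.coe_eq_zero_iff]
    exact pow_ne_zero _ Polynomial.X_ne_zero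
  have hRt : algEval R t = 0 := by
    rw [hR, algEval_mul, algEval_C] at hQt
    exact (mul_eq_zero.mp hQt).resolve_left hXne
  -- evalOO R = 0
  have hOO : evalOO R = 0 := by rw [← constCoeff_algEval R hct, hRt, map_zero]
  -- evalOO (derivative R) ≠ 0
  have hR1 : (R.coeff 1).coeff 0 ≠ 0 := by
    have h6 : (Q.coeff 1).coeff (0 + 2 * e) = (R.coeff 1).coeff 0 := by
      rw [hQR 1, Polynomial.coeff_X_pow_mul]
    have h7 : (Q.coeff 1).coeff (0 + 2 * e) = (P.derivative.eval f0).coeff e := by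
      rw [hQcoeff 1, Polynomial.taylor_coeff_one, pow_one,
        show 0 + 2 * e = e + e from by omega]
      exact Polynomial.coeff_mul_X_pow _ e e
    rw [← h6, h7, ← Polynomial.coeff_coe, hkey1]
    exact hcoeffeD0
  have hOOd : evalOO (Polynomial.derivative R) ≠ 0 := by
    rw [evalOO_derivative_eq]
    exact hR1
  have hRne : R ≠ 0 := by
    intro h9
    rw [h9] at hR1
    simp at hR1
  have hQne : Q ≠ 0 := by
    rw [hR]
    exact mul_ne_zero (by
      rw [Ne, Polynomial.C_eq_zero]
      exact pow_ne_zero _ Polynomial.X_ne_zero) hRne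
  -- degree bound
  have hdegQ : Q.natDegree ≤ d := by
    refine le_trans (Polynomial.natDegree_comp_le) ?_
    have h10 : (Polynomial.C ((Polynomial.X : Polynomial k) ^ e) * Polynomial.X).natDegree ≤ 1 := by
      refine le_trans Polynomial.natDegree_mul_le ?_
      simp
    calc (Polynomial.taylor f0 P).natDegree *
          (Polynomial.C ((Polynomial.X : Polynomial k) ^ e) * Polynomial.X).natDegree
        ≤ (Polynomial.taylor f0 P).natDegree * 1 := Nat.mul_le_mul_left _ h10
      _ = P.natDegree := by rw [mul_one, Polynomial.natDegree_taylor]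
      _ ≤ d := hd
  have hRdvdQ : R ∣ Q := ⟨Polynomial.C ((Polynomial.X : Polynomial k) ^ (2 * e)), by
    rw [hR]; ring⟩
  have hdegR : R.natDegree ≤ d := le_trans (Polynomial.natDegree_le_of_dvd hRdvdQ hQne) hdegQ
  -- height bound
  have hf0deg : f0.natDegree ≤ e := by
    rw [hf0]
    have := PowerSeries.natDegree_trunc_lt f e
    omega
  have hhtR : htPoly R ≤ h + e * (d - 2) := by
    apply Finset.sup_le
    intro j hj
    have hjne : R.coeff j ≠ 0 := Polynomial.mem_support_iff.mp hj
    have hjd : j ≤ d := le_trans (Polynomial.le_natDegree_of_ne_zero hjne) hdegR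
    -- bound on taylor coefficient
    have hTc : ((Polynomial.taylor f0 P).coeff j).natDegree ≤ h + (d - j) * e := by
      rw [Polynomial.taylor_coeff]
      refine le_trans (natDegree_eval_le _ _) ?_
      refine add_le_add (le_trans (htPoly_hasseDeriv_le P j) hh) ?_
      refine le_trans (Nat.mul_le_mul (le_trans (Polynomial.natDegree_hasseDeriv_le P j)
        (Nat.sub_le_sub_right hd j)) hf0deg) ?_
      exact le_rfl
    have hLHS : (Polynomial.X ^ (2 * e) * R.coeff j).natDegree
        = 2 * e + (R.coeff j).natDegree := by
      rw [Polynomial.natDegree_mul (pow_ne_zero _ Polynomial.X_ne_zero) hjne,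
        Polynomial.natDegree_X_pow]
    have hRHS : ((Polynomial.taylor f0 P).coeff j * (Polynomial.X ^ e) ^ j).natDegree
        ≤ (h + (d - j) * e) + e * j := by
      refine le_trans Polynomial.natDegree_mul_le (add_le_add hTc ?_)
      rw [← pow_mul, Polynomial.natDegree_X_pow]
    have heq : 2 * e + (R.coeff j).natDegree ≤ (h + (d - j) * e) + e * j := by
      rw [← hLHS, ← hQR j, hQcoeff j] at *
      exact hRHS
    have harith : (h + (d - j) * e) + e * j ≤ 2 * e + (h + e * (d - 2)) := by
      have h11 : (d - j) * e + e * j = e * d := by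
        rw [mul_comm (d - j) e, ← Nat.mul_add, Nat.sub_add_cancel hjd]
      have h12 : 2 * e + e * (d - 2) = e * (2 + (d - 2)) := by ring
      have h13 : e * d ≤ e * (2 + (d - 2)) := Nat.mul_le_mul_left e (by omega)
      omega
    omega
  -- uniqueness
  have huniq : ∀ g : PowerSeries k, PowerSeries.constantCoeff (R := k) g = 0 → algEval R g = 0 →
      g = t := by
    intro g hg hRg
    set Rm := R.map ψ with hRmdef
    have hRmt : Rm.eval t = 0 := by rw [hRmdef, hψ, ← algEval_eq]; exact hRt
    have hRmg : Rm.eval g = 0 := by rw [hRmdef, hψ, ← algEval_eq]; exact hRg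
    set W := Polynomial.taylor t Rm with hW
    have hW0 : W.coeff 0 = 0 := by rw [hW, Polynomial.taylor_coeff_zero]; exact hRmt
    set u := g - t with hu
    have hWu : W.eval u = 0 := by
      rw [hW, Polynomial.taylor_eval, hu, sub_add_cancel]
      exact hRmg
    have hcu : PowerSeries.constantCoeff (R := k) u = 0 := by
      rw [hu, map_sub, hg, hct, sub_zero]
    have hdecomp : W.divX.eval u * u = 0 := by
      have h14 := congrArg (Polynomial.eval u) (Polynomial.divX_mul_X_add W)
      rw [Polynomial.eval_add, Polynomial.eval_mul, Polynomial.eval_X, Polynomial.eval_C,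
        hW0, add_zero, hWu] at h14
      exact h14
    have hV : PowerSeries.constantCoeff (R := k) (W.divX.eval u) ≠ 0 := by
      rw [constCoeff_eval hcu, Polynomial.coeff_divX, zero_add, hW,
        Polynomial.taylor_coeff_one]
      have h15 : Rm.derivative.eval t = algEval (Polynomial.derivative R) t := by
        rw [algEval_eq, hRmdef, hψ, Polynomial.derivative_map]
      rw [h15, constCoeff_algEval _ hct]
      exact hOOd
    rcases mul_eq_zero.mp hdecomp with h16 | h16
    · exact absurd (by rw [h16, map_zero]) hV
    · rw [hu, sub_eq_zero] at h16
      exact h16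
  -- minimal polynomial for t
  obtain ⟨π, hπmin, hπdvd⟩ := exists_isMinPolyOf hRne hRt
  have hπroot : algEval π t = 0 := (hπmin.2 π).mpr dvd_rfl
  have hOOπ : evalOO π = 0 := by rw [← constCoeff_algEval π hct, hπroot, map_zero]
  have hOOπd : evalOO (Polynomial.derivative π) ≠ 0 := by
    obtain ⟨c, hc⟩ := hπdvd
    intro h17
    apply hOOd
    rw [hc, Polynomial.derivative_mul, evalOO_add, evalOO_mul, evalOO_mul, h17, hOOπ,
      zero_mul, zero_mul, add_zero]
  refine ⟨⟨R, hdegR, hhtR, hOO, hOOd, hRt, huniq⟩, hct, π, hπmin,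
    le_trans (Polynomial.natDegree_le_of_dvd hπdvd hRne) hdegR,
    le_trans (htPoly_dvd_le hπdvd hRne) hhtR, hOOπ, hOOπd⟩
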